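/- arXiv:2604.03501 — 2 statements merged into one kernel-verified Lean document; each statement's English description precedes it below -/
import Mathlib

section
/- Suppose β > 1 and γ, δ, κ, S̄ > 0. Let a = [κ((β-1)S̄ + 2γ) + γδ - √D] / (2κ²S̄²) with D = γ(δ+2κ)(2κ(β-1)S̄ + γ(δ+2κ)). Then the policy slope u₁ = ((β-1) - 2κaS̄)/(2γ) is strictly positive; equivalently (β-1) - 2κaS̄ = (√D - γ(δ+2κ))/(κS̄) > 0. -/
/-- For β > 1 the policy slope u₁ = ((β-1) - 2κaS̄)/(2γ) is strictly positive,
where a is the stable root of the HJB coefficient equation. -/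
theorem stmt_3 (β γ δ κ Sb : ℝ) (hβ : 1 < β) (hγ : 0 < γ) (hδ : 0 < δ)
    (hκ : 0 < κ) (hSb : 0 < Sb) :
    let D := γ * (δ + 2 * κ) * (2 * κ * (β - 1) * Sb + γ * (δ + 2 * κ))
    let a := (κ * ((β - 1) * Sb + 2 * γ) + γ * δ - Real.sqrt D) /
      (2 * κ ^ 2 * Sb ^ 2)
    (β - 1) - 2 * κ * a * Sb = (Real.sqrt D - γ * (δ + 2 * κ)) / (κ * Sb) ∧
    ((β - 1) - 2 * κ * a * Sb) / (2 * γ) > 0 := by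
  intro D a
  have hκSb : (0:ℝ) < κ * Sb := mul_pos hκ hSb
  have hD : 0 ≤ D := by
    simp only [D]
    have h1 : (0:ℝ) < δ + 2 * κ := by linarith
    have h2 : (0:ℝ) ≤ 2 * κ * (β - 1) * Sb := by nlinarith
    nlinarith [mul_pos hγ h1]
  have hsqlt : γ * (δ + 2 * κ) < Real.sqrt D := by
    have hpos : 0 < γ * (δ + 2 * κ) := mul_pos hγ (by linarith)
    have hDgt : (γ * (δ + 2 * κ))^2 < D := by
      have : 0 < 2 * κ * (β - 1) * Sb := by
        have := mul_pos (mul_pos (by linarith : (0:ℝ) < 2*κ) (by linarith : (0:ℝ) < β - 1)) hSb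
        linarith
      simp only [D]; nlinarith
    nlinarith [Real.sq_sqrt hD, Real.sqrt_nonneg D,
      Real.sqrt_lt_sqrt (by positivity : (0:ℝ) ≤ (γ * (δ + 2 * κ))^2) hDgt, Real.sqrt_sq hpos.le]
  have heq : (β - 1) - 2 * κ * a * Sb = (Real.sqrt D - γ * (δ + 2 * κ)) / (κ * Sb) := by
    simp only [a]
    field_simp
    ring
  refine ⟨heq, ?_⟩
  rw [heq]
  exact div_pos (div_pos (sub_pos.mpr hsqlt) hκSb) (by linarith)
end

section
/- Suppose β < 1 and γ, δ, κ, S̄ > 0 with 2κ(1-β)S̄ < γ(δ+2κ) (so D > 0). Let a = [κ((β-1)S̄ + 2γ) + γδ - √D]/(2κ²S̄²) with D = γ(δ+2κ)(2κ(β-1)S̄ + γ(δ+2κ)). Then u₁ = ((β-1) - 2κaS̄)/(2γ) < 0. -/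
/-- For β < 1 with 2κ(1-β)S̄ < γ(δ+2κ) (so D > 0), the policy slope
u₁ = ((β-1) - 2κaS̄)/(2γ) is strictly negative. -/
theorem stmt_4 (β γ δ κ Sb : ℝ) (hβ : β < 1) (hγ : 0 < γ) (hδ : 0 < δ)
    (hκ : 0 < κ) (hSb : 0 < Sb)
    (hD : 2 * κ * (1 - β) * Sb < γ * (δ + 2 * κ)) :
    let D := γ * (δ + 2 * κ) * (2 * κ * (β - 1) * Sb + γ * (δ + 2 * κ))
    let a := (κ * ((β - 1) * Sb + 2 * γ) + γ * δ - Real.sqrt D) /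
      (2 * κ ^ 2 * Sb ^ 2)
    ((β - 1) - 2 * κ * a * Sb) / (2 * γ) < 0 := by
  intro D a
  have hG : 0 < γ * (δ + 2 * κ) := by positivity
  have hDpos : 0 < D := by
    have h1 : 0 < 2 * κ * (β - 1) * Sb + γ * (δ + 2 * κ) := by nlinarith [hD]
    exact mul_pos hG h1
  have hsq : Real.sqrt D < γ * (δ + 2 * κ) := by
    have hX : 2 * κ * (β - 1) * Sb + γ * (δ + 2 * κ) < γ * (δ + 2 * κ) := by
      nlinarith [mul_pos (mul_pos hκ hSb) (sub_pos.mpr hβ)]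
    have hlt : D < (γ * (δ + 2 * κ)) ^ 2 := by
      have h := mul_lt_mul_of_pos_left hX hG
      simp only [D]
      nlinarith [h]
    calc Real.sqrt D < Real.sqrt ((γ * (δ + 2 * κ)) ^ 2) :=
          Real.sqrt_lt_sqrt hDpos.le hlt
      _ = γ * (δ + 2 * κ) := Real.sqrt_sq hG.le
  have hks : 0 < κ * Sb := mul_pos hκ hSb
  have h2 : 2 * κ * a * Sb =
      (κ * ((β - 1) * Sb + 2 * γ) + γ * δ - Real.sqrt D) / (κ * Sb) := by
    simp only [a]
    field_simp
  have hnum : (β - 1) - 2 * κ * a * Sb < 0 := by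
    rw [h2, sub_neg, lt_div_iff₀ hks]
    nlinarith
  exact div_neg_of_neg_of_pos hnum (by positivity)
end
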